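/- arXiv:1707.09730 — 8 statements merged into one kernel-verified Lean document; each statement's English description precedes it below -/
import Mathlib

section
/- In the deformed Clifford algebra Cl_q(n), for any 1 ≤ i ≤ n-1, the commutator [ψ_i ψ_{i+1}†, ψ_{i+1} ψ_i†] equals (v_i v_{i+1}^{-1} - v_i^{-1} v_{i+1})/(q - q^{-1}). -/
/-! Linear combinations of the two quadratic relations express `ψ_k† ψ_k` and `ψ_k ψ_k†`, up to the
factor `q - q⁻¹`, through `v_k^{±1}`. Anticommuting past the other index,
`ψ_i ψ_j† ψ_j ψ_i† = (ψ_j† ψ_j)(ψ_i ψ_i†)` for `i ≠ j`, so `(q - q⁻¹)²` times the commutator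
becomes a polynomial in the pairwise commuting `v_i^{±1}, v_j^{±1}`, which collapses to
`(q - q⁻¹)(v_i v_j⁻¹ - v_i⁻¹ v_j)`. -/

/-- The defining relations of the deformed Clifford algebra `Cl_q(n)`:
an associative algebra `A` over a field `K` with elements `ψ i`, `ψd i` (for `ψ_i†`),
`v i`, `vinv i` (for `v_i^{±1}`), `i < n`, satisfying the defining relations. -/
structure CliffordRel (K : Type*) (A : Type*) [Field K] [Ring A] [Algebra K A]
    (q : K) (n : ℕ) (ψ ψd v vinv : ℕ → A) : Prop where
  v_comm : ∀ i j, i < n → j < n → v i * v j = v j * v i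
  v_vinv : ∀ i, i < n → v i * vinv i = 1
  vinv_v : ∀ i, i < n → vinv i * v i = 1
  v_ψ : ∀ i j, i < n → j < n → v i * ψ j = (if i = j then q else 1) • (ψ j * v i)
  v_ψd : ∀ i j, i < n → j < n → v i * ψd j = (if i = j then q⁻¹ else 1) • (ψd j * v i)
  ψ_ψ : ∀ i j, i < n → j < n → ψ i * ψ j + ψ j * ψ i = 0
  ψd_ψd : ∀ i j, i < n → j < n → ψd i * ψd j + ψd j * ψd i = 0
  ψ_ψd : ∀ i j, i < n → j < n → i ≠ j → ψ i * ψd j + ψd j * ψ i = 0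
  rel_q : ∀ i, i < n → ψ i * ψd i + q • (ψd i * ψ i) = vinv i
  rel_qinv : ∀ i, i < n → ψ i * ψd i + q⁻¹ • (ψd i * ψ i) = v i

theorem sub_inv_ne_zero_of_sq_ne_one {K : Type*} [DivisionRing K] {q : K} (hq0 : q ≠ 0)
    (hq1 : q ^ 2 ≠ 1) : q - q⁻¹ ≠ 0 := by
  rw [sub_ne_zero]
  intro hq
  apply hq1
  rw [sq]
  nth_rw 2 [hq]
  exact mul_inv_cancel₀ hq0

theorem sub_mul_smul_sub_sub_sub_mul_smul_sub {K A : Type*} [CommRing K] [Ring A] [Algebra K A]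
    (q r : K) {a a' b b' : A} (hab : Commute a b) (hab' : Commute a b')
    (ha'b : Commute a' b) (ha'b' : Commute a' b') :
    (b' - b) * (q • a - r • a') - (a' - a) * (q • b - r • b') =
      (q - r) • (a * b' - a' * b) := by
  simp only [mul_sub, sub_mul, mul_smul_comm, hab.eq, hab'.eq, ha'b.eq, ha'b'.eq]
  module

namespace CliffordRel

variable {K A : Type*} [Field K] [Ring A] [Algebra K A] {q : K} {n : ℕ}
  {ψ ψd v vinv : ℕ → A} (h : CliffordRel K A q n ψ ψd v vinv)
include h

def vUnit {i : ℕ} (hi : i < n) : Aˣ := ⟨v i, vinv i, h.v_vinv i hi, h.vinv_v i hi⟩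

theorem smul_ψd_mul_ψ {k : ℕ} (hk : k < n) :
    (q - q⁻¹) • (ψd k * ψ k) = vinv k - v k := by
  rw [← h.rel_q k hk, ← h.rel_qinv k hk, sub_smul]
  abel

theorem smul_ψ_mul_ψd (hq0 : q ≠ 0) {k : ℕ} (hk : k < n) :
    (q - q⁻¹) • (ψ k * ψd k) = q • v k - q⁻¹ • vinv k := by
  rw [← h.rel_q k hk, ← h.rel_qinv k hk]
  simp only [smul_add, smul_smul, mul_inv_cancel₀ hq0, inv_mul_cancel₀ hq0, sub_smul, one_smul]
  abel

theorem ψ_mul_ψd_mul_ψ_mul_ψd {i j : ℕ} (hi : i < n) (hj : j < n) (hij : i ≠ j) :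
    (ψ i * ψd j) * (ψ j * ψd i) = (ψd j * ψ j) * (ψ i * ψd i) := by
  have hψψd : ψ i * ψd j = -(ψd j * ψ i) := eq_neg_of_add_eq_zero_left (h.ψ_ψd i j hi hj hij)
  have hψψ : ψ i * ψ j = -(ψ j * ψ i) := eq_neg_of_add_eq_zero_left (h.ψ_ψ i j hi hj)
  calc (ψ i * ψd j) * (ψ j * ψd i) = -(ψd j * (ψ i * ψ j) * ψd i) := by
        rw [hψψd]; noncomm_ring
    _ = (ψd j * ψ j) * (ψ i * ψd i) := by
        rw [hψψ]; noncomm_ring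

theorem smul_smul_commutator (hq0 : q ≠ 0) {i j : ℕ} (hi : i < n) (hj : j < n) (hij : i ≠ j) :
    (q - q⁻¹) • (q - q⁻¹) •
      ((ψ i * ψd j) * (ψ j * ψd i) - (ψ j * ψd i) * (ψ i * ψd j)) =
      (q - q⁻¹) • (v i * vinv j - vinv i * v j) := by
  have hvv : Commute (h.vUnit hi : A) (h.vUnit hj) := h.v_comm i j hi hj
  rw [h.ψ_mul_ψd_mul_ψ_mul_ψd hi hj hij, h.ψ_mul_ψd_mul_ψ_mul_ψd hj hi hij.symm, smul_smul,
    smul_sub, ← smul_mul_smul, ← smul_mul_smul, h.smul_ψd_mul_ψ hi, h.smul_ψd_mul_ψ hj,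
    h.smul_ψ_mul_ψd hq0 hi, h.smul_ψ_mul_ψd hq0 hj]
  exact sub_mul_smul_sub_sub_sub_mul_smul_sub q q⁻¹ hvv hvv.units_inv_right
    hvv.units_inv_left hvv.units_inv_left.units_inv_right

end CliffordRel

/-- In `Cl_q(n)`, for `1 ≤ i ≤ n-1` (here 0-indexed: `i+1 < n`),
`[ψ_i ψ_{i+1}†, ψ_{i+1} ψ_i†] = (v_i v_{i+1}⁻¹ - v_i⁻¹ v_{i+1})/(q - q⁻¹)`. -/
theorem stmt1 {K A : Type*} [Field K] [Ring A] [Algebra K A]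
    (q : K) (hq0 : q ≠ 0) (hq1 : q ^ 2 ≠ 1)
    (n : ℕ) (ψ ψd v vinv : ℕ → A)
    (h : CliffordRel K A q n ψ ψd v vinv) :
    ∀ i, i + 1 < n →
      (ψ i * ψd (i+1)) * (ψ (i+1) * ψd i) - (ψ (i+1) * ψd i) * (ψ i * ψd (i+1)) =
        (q - q⁻¹)⁻¹ • (v i * vinv (i+1) - vinv i * v (i+1)) := by
  intro i hi
  have hs := sub_inv_ne_zero_of_sq_ne_one hq0 hq1
  rw [eq_inv_smul_iff₀ hs]
  exact smul_right_injective A hs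
    (h.smul_smul_commutator hq0 (Nat.lt_of_succ_lt hi) hi (Nat.succ_ne_self i).symm)
end

section
/- In the deformed Clifford algebra Cl_q(n), with E_i = ψ_i ψ_{i+1}† for 1 ≤ i ≤ n-1, the quantum Serre relation E_{i-1}² E_i - (q + q^{-1}) E_{i-1} E_i E_{i-1} + E_i E_{i-1}² = 0 holds for all 2 ≤ i ≤ n-1. -/
section QuadraticRelations

variable {K A : Type*} [Field K] [Ring A] [Algebra K A] {q : K} {a b V W : A}

lemma mul_eq_inv_smul_mul_of_mul_eq_smul_mul (hq : q ≠ 0) (hVW : V * W = 1) (hWV : W * V = 1)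
    (h : V * a = q • (a * V)) : W * a = q⁻¹ • (a * W) := by
  have haV : a * V = q⁻¹ • (V * a) := by rw [h, smul_smul, inv_mul_cancel₀ hq, one_smul]
  calc W * a = W * (a * V) * W := by rw [mul_assoc, mul_assoc, hVW, mul_one]
    _ = q⁻¹ • (a * W) := by
      rw [haV, mul_smul_comm, smul_mul_assoc, ← mul_assoc, hWV, one_mul]

lemma mul_mul_self_eq_of_add_smul_mul_eq (hq : q ≠ 0) (hrel : a * b + q • (b * a) = W)
    (hW : W * a = q⁻¹ • (a * W)) : b * a * a = (q⁻¹ * q⁻¹) • (a * (a * b)) := by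
  have hba : b * a = q⁻¹ • (W - a * b) := by
    rw [← hrel, add_sub_cancel_left, smul_smul, inv_mul_cancel₀ hq, one_smul]
  rw [hba, smul_mul_assoc, sub_mul, hW, mul_assoc, hba, mul_smul_comm, mul_sub, ← smul_sub,
    sub_sub_cancel, smul_smul]

lemma smul_mul_self_eq_zero (hq : q ≠ 0) (hW : a * b + q • (b * a) = W)
    (hV : a * b + q⁻¹ • (b * a) = V) (hVa : V * a = q • (a * V))
    (hVW : V * W = 1) (hWV : W * V = 1) : (q⁻¹ * q⁻¹ - q * q) • (a * a) = 0 := by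
  set c := q⁻¹ * q⁻¹ - q * q
  have hWa := mul_eq_inv_smul_mul_of_mul_eq_smul_mul hq hVW hWV hVa
  have hVa' : V * a = (q⁻¹)⁻¹ • (a * V) := by rw [inv_inv, hVa]
  have haab : c • (a * (a * b)) = 0 := by
    have h₁ := mul_mul_self_eq_of_add_smul_mul_eq hq hW hWa
    have h₂ := mul_mul_self_eq_of_add_smul_mul_eq (inv_ne_zero hq) hV hVa'
    rw [inv_inv] at h₂
    rw [sub_smul, ← h₁, ← h₂, sub_self]
  calc c • (a * a) = c • (a * a * W) * V := by rw [smul_mul_assoc, mul_assoc, hWV, mul_one]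
    _ = (a * c • (a * (a * b)) + q • (c • (a * (a * b)) * a)) * V := by
      rw [← hW]
      simp only [mul_add, smul_add, mul_smul_comm, smul_mul_assoc, mul_assoc, smul_comm c q]
    _ = 0 := by rw [haab, mul_zero, zero_mul, smul_zero, add_zero, zero_mul]

lemma mul_self_eq_zero_of_quadratic_relations (hq0 : q ≠ 0) (hq1 : q ^ 2 ≠ 1)
    (hW : a * b + q • (b * a) = W) (hV : a * b + q⁻¹ • (b * a) = V)
    (hVa : V * a = q • (a * V)) (hVW : V * W = 1) (hWV : W * V = 1)
    (haa : a * a + a * a = 0) : a * a = 0 := by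
  by_cases hc : q⁻¹ * q⁻¹ - q * q = 0
  · have hq2 : q ^ 2 = -1 := by
      have h4 : (q ^ 2 - 1) * (q ^ 2 + 1) = 0 := by
        field_simp at hc
        linear_combination -hc
      exact eq_neg_of_add_eq_zero_left
        ((mul_eq_zero.mp h4).resolve_left (sub_ne_zero.mpr hq1))
    have h2 : (2 : K) ≠ 0 := fun h2 => hq1 (by linear_combination hq2 - h2)
    exact (smul_eq_zero.mp (by rwa [two_smul] : (2 : K) • (a * a) = 0)).resolve_left h2
  · exact (smul_eq_zero.mp (smul_mul_self_eq_zero hq0 hW hV hVa hVW hWV)).resolve_left hc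

end QuadraticRelations

section Anticommuting

variable {R : Type*} [Ring R] {a b c d : R}

lemma commute_mul_of_anticommute (hc : c * a = -(a * c)) (hd : d * a = -(a * d)) :
    Commute (c * d) a := by
  rw [Commute, SemiconjBy, mul_assoc, hd, mul_neg, ← mul_assoc, hc, neg_mul, neg_neg, mul_assoc]

lemma mul_mul_mul_eq_zero_of_mul_self_eq_zero (ha : a * a = 0) (hb : b * a = -(a * b)) {f : R}
    (hf : Commute f a) : a * b * f * (a * b) = 0 := by
  simp only [← mul_assoc]
  rw [mul_assoc (a * b) f a, hf.eq, ← mul_assoc, mul_assoc a b a, hb]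
  simp only [mul_neg, ← mul_assoc, ha, zero_mul, neg_zero]

end Anticommuting

namespace CliffordRel

variable {K A : Type*} [Field K] [Ring A] [Algebra K A] {q : K} {n : ℕ} {ψ ψd v vinv : ℕ → A}

lemma ψ_mul_self (h : CliffordRel K A q n ψ ψd v vinv) (hq0 : q ≠ 0) (hq1 : q ^ 2 ≠ 1)
    {i : ℕ} (hi : i < n) : ψ i * ψ i = 0 :=
  mul_self_eq_zero_of_quadratic_relations hq0 hq1 (h.rel_q i hi) (h.rel_qinv i hi)
    (by simpa using h.v_ψ i i hi hi) (h.v_vinv i hi) (h.vinv_v i hi) (h.ψ_ψ i i hi hi)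

lemma ψ_mul_ψ_eq_neg (h : CliffordRel K A q n ψ ψd v vinv) {i j : ℕ} (hi : i < n) (hj : j < n) :
    ψ j * ψ i = -(ψ i * ψ j) :=
  eq_neg_of_add_eq_zero_right (h.ψ_ψ i j hi hj)

lemma ψd_ψ_mul_ψ_eq_neg (h : CliffordRel K A q n ψ ψd v vinv) {i j : ℕ} (hi : i < n) (hj : j < n)
    (hij : i ≠ j) : ψd j * ψ i = -(ψ i * ψd j) :=
  eq_neg_of_add_eq_zero_right (h.ψ_ψd i j hi hj hij)

end CliffordRel

/-- In `Cl_q(n)`, with `E_i = ψ_i ψ_{i+1}†`, the quantum Serre relation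
`E_{i-1}² E_i - (q + q⁻¹) E_{i-1} E_i E_{i-1} + E_i E_{i-1}² = 0` holds for `2 ≤ i ≤ n-1`
(0-indexed: `1 ≤ i` and `i+1 < n`). -/
theorem stmt5 {K A : Type*} [Field K] [Ring A] [Algebra K A]
    (q : K) (hq0 : q ≠ 0) (hq1 : q ^ 2 ≠ 1)
    (n : ℕ) (ψ ψd v vinv : ℕ → A)
    (h : CliffordRel K A q n ψ ψd v vinv) :
    ∀ i, 1 ≤ i → i + 1 < n →
      (ψ (i-1) * ψd i) ^ 2 * (ψ i * ψd (i+1))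
        - (q + q⁻¹) • ((ψ (i-1) * ψd i) * (ψ i * ψd (i+1)) * (ψ (i-1) * ψd i))
        + (ψ i * ψd (i+1)) * (ψ (i-1) * ψd i) ^ 2 = 0 := by
  intro i hi hin
  have hψψ := h.ψ_mul_self hq0 hq1 (show i - 1 < n by omega)
  have hE := h.ψd_ψ_mul_ψ_eq_neg (i := i - 1) (j := i) (by omega) (by omega) (by omega)
  have hF : Commute (ψ i * ψd (i + 1)) (ψ (i - 1)) :=
    commute_mul_of_anticommute (h.ψ_mul_ψ_eq_neg (by omega) (by omega))
      (h.ψd_ψ_mul_ψ_eq_neg (by omega) (by omega) (by omega))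
  have hEE : (ψ (i-1) * ψd i) ^ 2 = 0 := by
    simpa [sq] using mul_mul_mul_eq_zero_of_mul_self_eq_zero hψψ hE (Commute.one_left _)
  rw [hEE, mul_mul_mul_eq_zero_of_mul_self_eq_zero hψψ hE hF]
  simp
end

section
/- The Fock space V_q(n) with basis |r⟩ for r ∈ {0,1}^n, equipped with the actions v_i |r⟩ = q^{-r_i} |r⟩, ψ_i |r⟩ = (-1)^{r_1+⋯+r_{i-1}} |r - e_i⟩, and ψ_i† |r⟩ = (-1)^{r_1+⋯+r_{i-1}} |r + e_i⟩ (with |r ± e_i⟩ = 0 when r_i ± 1 ∉ {0,1}), is a well-defined module for the deformed Clifford algebra Cl_q(n), i.e., these operators satisfy all defining relations of Cl_q(n). -/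
/-!
Write `ψ_i` and `ψ_i†` uniformly as ladder operators that move the `i`-th occupation number
from one value to the other and multiply by `(-1)^{r_1+⋯+r_{i-1}}`. For `i < j`, applying the
mode-`i` operator first changes `r_i`, which flips the sign the mode-`j` operator sees, while
the reverse order leaves the sign at `i` untouched: the two products differ by `-1`. For equal
indices, `ψ_i ψ_i†` and `ψ_i† ψ_i` are the projections onto `r_i = 0` and `r_i = 1`, and `v_i`
acts diagonally, so the remaining relations are checked one basis vector at a time.
-/

open Finset in
/-- The sign `(-1)^{r_1 + ⋯ + r_{i-1}}` appearing in the Fock space action. -/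
def fockSgn {K : Type*} [Field K] {n : ℕ} (r : Fin n → Fin 2) (i : Fin n) : K :=
  (-1) ^ (∑ j : Fin n, if (j : ℕ) < (i : ℕ) then ((r j : ℕ)) else 0)

/-- The Fock space `V_q(n)`, with basis `|r⟩` for `r ∈ {0,1}ⁿ`, realised as the space of
`K`-valued functions on `{0,1}ⁿ` (`f r` is the coefficient of `|r⟩`). -/
def FockV (K : Type*) [Field K] (n : ℕ) : Type _ := (Fin n → Fin 2) → K

noncomputable instance (K : Type*) [Field K] (n : ℕ) : AddCommGroup (FockV K n) :=
  inferInstanceAs (AddCommGroup ((Fin n → Fin 2) → K))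
noncomputable instance (K : Type*) [Field K] (n : ℕ) : Module K (FockV K n) :=
  inferInstanceAs (Module K ((Fin n → Fin 2) → K))

/-- The operator `ψ_i` on the Fock space: `ψ_i |r⟩ = (-1)^{r_1+⋯+r_{i-1}} |r - e_i⟩`. -/
def ψop {K : Type*} [Field K] {n : ℕ} (i : Fin n) (f : FockV K n) : FockV K n :=
  fun r => if r i = 0 then fockSgn r i * f (Function.update r i 1) else 0

/-- The operator `ψ_i†` on the Fock space: `ψ_i† |r⟩ = (-1)^{r_1+⋯+r_{i-1}} |r + e_i⟩`. -/
def ψdop {K : Type*} [Field K] {n : ℕ} (i : Fin n) (f : FockV K n) : FockV K n :=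
  fun r => if r i = 1 then fockSgn r i * f (Function.update r i 0) else 0

/-- The operator `v_i` on the Fock space: `v_i |r⟩ = q^{-r_i} |r⟩`. -/
def vop {K : Type*} [Field K] {n : ℕ} (q : K) (i : Fin n) (f : FockV K n) : FockV K n :=
  fun r => q⁻¹ ^ ((r i : ℕ)) * f r

/-- The operator `v_i⁻¹` on the Fock space: `v_i⁻¹ |r⟩ = q^{r_i} |r⟩`. -/
def vinvop {K : Type*} [Field K] {n : ℕ} (q : K) (i : Fin n) (f : FockV K n) : FockV K n :=
  fun r => q ^ ((r i : ℕ)) * f r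

open Function

section FockLadder

variable {K : Type*} [Field K] {n : ℕ}

@[simp]
theorem FockV.zero_apply (r : Fin n → Fin 2) : (0 : FockV K n) r = 0 := rfl

@[simp]
theorem FockV.add_apply (f g : FockV K n) (r : Fin n → Fin 2) : (f + g) r = f r + g r := rfl

@[simp]
theorem FockV.smul_apply (c : K) (f : FockV K n) (r : Fin n → Fin 2) : (c • f) r = c * f r := rfl

/-- `fockLadder a b i |r⟩ = ±|r with r_i := a⟩` if `r_i = b`, and `0` otherwise. -/
def fockLadder (a b : Fin 2) (i : Fin n) (f : FockV K n) : FockV K n :=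
  fun r => if r i = a then fockSgn r i * f (update r i b) else 0

theorem ψop_eq_fockLadder (i : Fin n) : ψop (K := K) i = fockLadder 0 1 i := rfl

theorem ψdop_eq_fockLadder (i : Fin n) : ψdop (K := K) i = fockLadder 1 0 i := rfl

theorem fockSgn_mul_self (r : Fin n → Fin 2) (i : Fin n) :
    fockSgn (K := K) r i * fockSgn r i = 1 := by
  rw [fockSgn, ← pow_add]
  exact Even.neg_one_pow ⟨_, rfl⟩

theorem fockSgn_update_of_le (r : Fin n → Fin 2) {i j : Fin n} (v : Fin 2) (h : i ≤ j) :
    fockSgn (K := K) (update r j v) i = fockSgn r i := by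
  unfold fockSgn
  congr 1
  refine Finset.sum_congr rfl fun k _ => ?_
  split_ifs with hk
  · rw [update_of_ne (by rintro rfl; exact absurd h (not_le.2 (Fin.lt_def.2 hk)))]
  · rfl

theorem fockSgn_update_of_lt (r : Fin n → Fin 2) {i j : Fin n} {v : Fin 2} (h : j < i)
    (hv : v ≠ r j) : fockSgn (K := K) (update r j v) i = -fockSgn r i := by
  have split_off_j : ∀ s : Fin n → Fin 2,
      (∑ k : Fin n, if (k : ℕ) < i then (s k : ℕ) else 0)
        = s j + ∑ k ∈ Finset.univ.erase j, if (k : ℕ) < i then (s k : ℕ) else 0 := fun s => by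
    rw [← Finset.add_sum_erase _ _ (Finset.mem_univ j), if_pos (Fin.lt_def.1 h)]
  have rest_eq : ∑ k ∈ Finset.univ.erase j, (if (k : ℕ) < i then (update r j v k : ℕ) else 0)
      = ∑ k ∈ Finset.univ.erase j, (if (k : ℕ) < i then (r k : ℕ) else 0) :=
    Finset.sum_congr rfl fun k hk => by rw [update_of_ne (Finset.ne_of_mem_erase hk)]
  have flip : ((-1 : K) ^ (v : ℕ)) = -(-1) ^ (r j : ℕ) := by
    rcases Fin.exists_fin_two.1 ⟨v, rfl⟩ with rfl | rfl <;>
      rcases Fin.exists_fin_two.1 ⟨r j, rfl⟩ with h' | h' <;> simp_all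
  rw [fockSgn, fockSgn, split_off_j, split_off_j, rest_eq, update_self, pow_add, pow_add, flip,
    neg_mul]

theorem isLinearMap_fockLadder (a b : Fin 2) (i : Fin n) :
    IsLinearMap K (fockLadder (K := K) a b i) := by
  refine ⟨fun f g => funext fun r => ?_, fun c f => funext fun r => ?_⟩ <;>
  · simp only [fockLadder, FockV.add_apply, FockV.smul_apply]
    split_ifs <;> ring

theorem fockLadder_fockLadder_self {a b : Fin 2} (hab : a ≠ b) (i : Fin n) (f : FockV K n) :
    fockLadder a b i (fockLadder a b i f) = 0 := by
  funext r
  simp [fockLadder, hab.symm]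

theorem fockLadder_fockLadder_swap_apply (a b : Fin 2) (i : Fin n) (f : FockV K n)
    (r : Fin n → Fin 2) :
    fockLadder a b i (fockLadder b a i f) r = if r i = a then f r else 0 := by
  by_cases hr : r i = a
  · simp only [fockLadder, hr, update_self, update_idem, if_true,
      fockSgn_update_of_le _ _ le_rfl, ← mul_assoc, fockSgn_mul_self, one_mul]
    rw [← hr, update_eq_self]
  · simp [fockLadder, hr]

theorem fockLadder_anticomm_of_lt {a b : Fin 2} (hab : a ≠ b) (c d : Fin 2) {i j : Fin n}
    (h : i < j) (f : FockV K n) :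
    fockLadder a b i (fockLadder c d j f) + fockLadder c d j (fockLadder a b i f) = 0 := by
  funext r
  simp only [fockLadder, FockV.add_apply, update_of_ne h.ne, update_of_ne h.ne']
  by_cases hi : r i = a
  · by_cases hj : r j = c
    · rw [if_pos hi, if_pos hj, if_pos hj, if_pos hi, fockSgn_update_of_le _ _ h.le,
        fockSgn_update_of_lt _ h (hi ▸ hab.symm), update_comm h.ne, FockV.zero_apply]
      ring
    · simp [hi, hj]
  · simp [hi]

theorem fockLadder_anticomm {a b c d : Fin 2} (hab : a ≠ b) (hcd : c ≠ d) {i j : Fin n}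
    (hij : i ≠ j) (f : FockV K n) :
    fockLadder a b i (fockLadder c d j f) + fockLadder c d j (fockLadder a b i f) = 0 := by
  rcases hij.lt_or_gt with h | h
  · exact fockLadder_anticomm_of_lt hab c d h f
  · rw [add_comm]
    exact fockLadder_anticomm_of_lt hcd a b h f

theorem fockLadder_anticomm_self {a b : Fin 2} (hab : a ≠ b) (i j : Fin n) (f : FockV K n) :
    fockLadder a b i (fockLadder a b j f) + fockLadder a b j (fockLadder a b i f) = 0 := by
  rcases eq_or_ne i j with rfl | hij
  · rw [fockLadder_fockLadder_self hab, add_zero]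
  · exact fockLadder_anticomm hab hab hij f

theorem ψop_ψdop_add_smul_ψdop_ψop (c : K) (i : Fin n) (f : FockV K n) :
    ψop i (ψdop i f) + c • ψdop i (ψop i f) = vinvop c i f := by
  funext r
  simp only [FockV.add_apply, FockV.smul_apply, ψop_eq_fockLadder, ψdop_eq_fockLadder,
    fockLadder_fockLadder_swap_apply, vinvop]
  rcases Fin.exists_fin_two.1 ⟨r i, rfl⟩ with hr | hr <;> simp [hr]

end FockLadder

section Weights

variable {K : Type*} [Field K] {n : ℕ} (q : K)

theorem isLinearMap_vop (i : Fin n) : IsLinearMap K (vop q i) :=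
  ⟨fun f g => funext fun r => mul_add _ (f r) (g r),
    fun c f => funext fun r => mul_left_comm _ c (f r)⟩

theorem isLinearMap_vinvop (i : Fin n) : IsLinearMap K (vinvop q i) :=
  ⟨fun f g => funext fun r => mul_add _ (f r) (g r),
    fun c f => funext fun r => mul_left_comm _ c (f r)⟩

theorem vop_comm (i j : Fin n) (f : FockV K n) : vop q i (vop q j f) = vop q j (vop q i f) :=
  funext fun r => mul_left_comm _ _ (f r)

variable {q}

theorem vop_vinvop (hq : q ≠ 0) (i : Fin n) (f : FockV K n) : vop q i (vinvop q i f) = f :=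
  funext fun r => by
    simp only [vop, vinvop]
    rw [← mul_assoc, ← mul_pow, inv_mul_cancel₀ hq, one_pow, one_mul]

theorem vinvop_vop (hq : q ≠ 0) (i : Fin n) (f : FockV K n) : vinvop q i (vop q i f) = f :=
  funext fun r => by
    simp only [vop, vinvop]
    rw [← mul_assoc, ← mul_pow, mul_inv_cancel₀ hq, one_pow, one_mul]

theorem vop_fockLadder (hq : q ≠ 0) (i j : Fin n) (a b : Fin 2) (f : FockV K n) :
    vop q i (fockLadder a b j f)
      = (if i = j then q⁻¹ ^ (a : ℕ) * q ^ (b : ℕ) else 1) • fockLadder a b j (vop q i f) := by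
  funext r
  simp only [vop, fockLadder, FockV.smul_apply]
  by_cases hr : r j = a
  · by_cases hij : i = j
    · subst hij
      have hb : q ^ (b : ℕ) * q⁻¹ ^ (b : ℕ) = 1 := by rw [← mul_pow, mul_inv_cancel₀ hq, one_pow]
      rw [if_pos rfl, if_pos hr, if_pos hr, hr, update_self]
      linear_combination (-(q⁻¹ ^ (a : ℕ) * fockSgn r i * f (update r i b))) * hb
    · rw [if_neg hij, if_pos hr, if_pos hr, update_of_ne hij]
      ring
  · simp [hr]

end Weights

theorem stmt7_general {K : Type*} [Field K] (q : K) (hq0 : q ≠ 0) (n : ℕ) :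
    (∀ i : Fin n, IsLinearMap K (ψop (K := K) i)) ∧
    (∀ i : Fin n, IsLinearMap K (ψdop (K := K) i)) ∧
    (∀ i : Fin n, IsLinearMap K (vop q i)) ∧
    (∀ i : Fin n, IsLinearMap K (vinvop q i)) ∧
    (∀ (i j : Fin n) (f : FockV K n), vop q i (vop q j f) = vop q j (vop q i f)) ∧
    (∀ (i : Fin n) (f : FockV K n), vop q i (vinvop q i f) = f) ∧
    (∀ (i : Fin n) (f : FockV K n), vinvop q i (vop q i f) = f) ∧
    (∀ (i j : Fin n) (f : FockV K n),
      vop q i (ψop j f) = (if i = j then q else 1) • ψop j (vop q i f)) ∧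
    (∀ (i j : Fin n) (f : FockV K n),
      vop q i (ψdop j f) = (if i = j then q⁻¹ else 1) • ψdop j (vop q i f)) ∧
    (∀ (i j : Fin n) (f : FockV K n), ψop i (ψop j f) + ψop j (ψop i f) = 0) ∧
    (∀ (i j : Fin n) (f : FockV K n), ψdop i (ψdop j f) + ψdop j (ψdop i f) = 0) ∧
    (∀ (i j : Fin n) (f : FockV K n), i ≠ j → ψop i (ψdop j f) + ψdop j (ψop i f) = 0) ∧
    (∀ (i : Fin n) (f : FockV K n),
      ψop i (ψdop i f) + q • ψdop i (ψop i f) = vinvop q i f) ∧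
    (∀ (i : Fin n) (f : FockV K n),
      ψop i (ψdop i f) + q⁻¹ • ψdop i (ψop i f) = vop q i f) :=
  ⟨isLinearMap_fockLadder 0 1, isLinearMap_fockLadder 1 0, isLinearMap_vop q,
    isLinearMap_vinvop q, vop_comm q, vop_vinvop hq0, vinvop_vop hq0,
    fun i j f => by simpa [ψop_eq_fockLadder] using vop_fockLadder hq0 i j 0 1 f,
    fun i j f => by simpa [ψdop_eq_fockLadder] using vop_fockLadder hq0 i j 1 0 f,
    fun _ _ => fockLadder_anticomm_self zero_ne_one _ _,
    fun _ _ => fockLadder_anticomm_self one_ne_zero _ _,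
    fun _ _ f hij => fockLadder_anticomm zero_ne_one one_ne_zero hij f,
    ψop_ψdop_add_smul_ψdop_ψop q, ψop_ψdop_add_smul_ψdop_ψop q⁻¹⟩

/-- The Fock space `V_q(n)` with the given actions of `ψ_i`, `ψ_i†`, `v_i^{±1}`
is a well-defined module over `Cl_q(n)`: the operators are `K`-linear and satisfy all the
defining relations of the deformed Clifford algebra. -/
theorem stmt7 {K : Type*} [Field K] (q : K) (hq0 : q ≠ 0) (hq1 : q ^ 2 ≠ 1) (n : ℕ) :
    (∀ i : Fin n, IsLinearMap K (ψop (K := K) i)) ∧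
    (∀ i : Fin n, IsLinearMap K (ψdop (K := K) i)) ∧
    (∀ i : Fin n, IsLinearMap K (vop q i)) ∧
    (∀ i : Fin n, IsLinearMap K (vinvop q i)) ∧
    (∀ (i j : Fin n) (f : FockV K n), vop q i (vop q j f) = vop q j (vop q i f)) ∧
    (∀ (i : Fin n) (f : FockV K n), vop q i (vinvop q i f) = f) ∧
    (∀ (i : Fin n) (f : FockV K n), vinvop q i (vop q i f) = f) ∧
    (∀ (i j : Fin n) (f : FockV K n),
      vop q i (ψop j f) = (if i = j then q else 1) • ψop j (vop q i f)) ∧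
    (∀ (i j : Fin n) (f : FockV K n),
      vop q i (ψdop j f) = (if i = j then q⁻¹ else 1) • ψdop j (vop q i f)) ∧
    (∀ (i j : Fin n) (f : FockV K n), ψop i (ψop j f) + ψop j (ψop i f) = 0) ∧
    (∀ (i j : Fin n) (f : FockV K n), ψdop i (ψdop j f) + ψdop j (ψdop i f) = 0) ∧
    (∀ (i j : Fin n) (f : FockV K n), i ≠ j → ψop i (ψdop j f) + ψdop j (ψop i f) = 0) ∧
    (∀ (i : Fin n) (f : FockV K n),
      ψop i (ψdop i f) + q • ψdop i (ψop i f) = vinvop q i f) ∧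
    (∀ (i : Fin n) (f : FockV K n),
      ψop i (ψdop i f) + q⁻¹ • ψdop i (ψop i f) = vop q i f) :=
  stmt7_general q hq0 n
end

section
/- The Fock space V_q(n) is an irreducible module over the deformed Clifford algebra Cl_q(n): any nonzero submodule equals V_q(n). -/
/-! The products `ψ_i† ψ_i` and `ψ_i ψ_i†` are the projections onto the coordinate subspaces
`r_i = 1` and `r_i = 0`; composing them over all `i`, a submodule stable under the `ψ`'s contains
`f(r) • |r⟩` whenever it contains `f`. And `ψ_i + ψ_i†` flips the `i`-th occupation number up to
sign, so a nonzero stable submodule has, for every `r`, an element with nonzero `|r⟩`-coefficient.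
Hence it contains every basis vector. -/

open Function

theorem Set.eq_univ_of_forall_update_mem {ι α : Type*} [Fintype ι] [DecidableEq ι]
    {S : Set (ι → α)} {x : ι → α} (hx : x ∈ S)
    (hS : ∀ y ∈ S, ∀ i a, update y i a ∈ S) : S = Set.univ := by
  refine Set.eq_univ_of_forall fun y => ?_
  suffices h : ∀ t : Finset ι, (fun i => if i ∈ t then y i else x i) ∈ S by
    simpa using h Finset.univ
  intro t
  induction t using Finset.induction_on with
  | empty => simpa using hx
  | @insert a t _ ih =>
    convert hS _ ih a (y a) using 1
    funext i
    by_cases hi : i = a <;> simp [hi]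

lemma Fin.two_eq_add_one_of_ne {a b : Fin 2} (h : a ≠ b) : a = b + 1 := by
  revert a b
  decide

namespace FockV

variable {K : Type*} [Field K] {n : ℕ}

lemma fockSgn_update_self (r : Fin n → Fin 2) (i : Fin n) (b : Fin 2) :
    fockSgn (K := K) (update r i b) i = fockSgn r i := by
  unfold fockSgn
  congr 1
  refine Finset.sum_congr rfl fun j _ => ?_
  split_ifs with h
  · rw [update_of_ne (Fin.ne_of_lt h)]
  · rfl

lemma fockSgn_mul_self (r : Fin n → Fin 2) (i : Fin n) :
    fockSgn (K := K) r i * fockSgn r i = 1 := by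
  rw [fockSgn, ← mul_pow]
  norm_num

lemma fockSgn_ne_zero (r : Fin n → Fin 2) (i : Fin n) : fockSgn (K := K) r i ≠ 0 :=
  left_ne_zero_of_mul_eq_one (fockSgn_mul_self r i)

lemma ψdop_ψop (i : Fin n) (f : FockV K n) :
    ψdop i (ψop i f) = fun r => if r i = 1 then f r else 0 := by
  funext r
  by_cases h : r i = 1
  · simp only [ψdop, ψop, h, update_self, fockSgn_update_self, ← mul_assoc, fockSgn_mul_self,
      one_mul, update_idem, if_true]
    rw [← h, update_eq_self]
  · simp [ψdop, h]

lemma ψop_ψdop (i : Fin n) (f : FockV K n) :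
    ψop i (ψdop i f) = fun r => if r i = 0 then f r else 0 := by
  funext r
  by_cases h : r i = 0
  · simp only [ψdop, ψop, h, update_self, fockSgn_update_self, ← mul_assoc, fockSgn_mul_self,
      one_mul, update_idem, if_true]
    rw [← h, update_eq_self]
  · simp [ψop, h]

lemma ψop_add_ψdop_apply (i : Fin n) (f : FockV K n) (r : Fin n → Fin 2) :
    (ψop i f + ψdop i f) r = fockSgn r i * f (update r i (r i + 1)) := by
  show ψop i f r + ψdop i f r = _
  unfold ψop ψdop
  rcases Fin.exists_fin_two.mp ⟨r i, rfl⟩ with h | h <;> simp [h]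

def ket (r : Fin n → Fin 2) : FockV K n := fun s => if r = s then 1 else 0

lemma eq_top_of_forall_ket_mem {W : Submodule K (FockV K n)} (h : ∀ r, ket r ∈ W) : W = ⊤ := by
  refine Submodule.eq_top_iff'.mpr fun g => ?_
  rw [pi_eq_sum_univ g]
  exact W.sum_mem fun r _ => W.smul_mem _ (h r)

section Invariant

variable {W : Submodule K (FockV K n)}
  (hψ : ∀ (i : Fin n) (f : FockV K n), f ∈ W → ψop i f ∈ W)
  (hψd : ∀ (i : Fin n) (f : FockV K n), f ∈ W → ψdop i f ∈ W)
include hψ hψd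

lemma ite_apply_eq_mem {f : FockV K n} (hf : f ∈ W) (i : Fin n) (b : Fin 2) :
    (fun r => if r i = b then f r else 0 : FockV K n) ∈ W := by
  rcases Fin.exists_fin_two.mp ⟨b, rfl⟩ with rfl | rfl
  · rw [← ψop_ψdop]
    exact hψ i _ (hψd i f hf)
  · rw [← ψdop_ψop]
    exact hψd i _ (hψ i f hf)

lemma ite_forall_apply_eq_mem {f : FockV K n} (hf : f ∈ W) (r₀ : Fin n → Fin 2)
    (t : Finset (Fin n)) :
    (fun r => if ∀ i ∈ t, r i = r₀ i then f r else 0 : FockV K n) ∈ W := by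
  induction t using Finset.induction_on with
  | empty =>
    simp only [Finset.notMem_empty, IsEmpty.forall_iff, implies_true, if_true]
    exact hf
  | @insert a t _ ih =>
    convert ite_apply_eq_mem hψ hψd ih a (r₀ a) using 1
    simp only [Finset.forall_mem_insert, ite_and]

lemma ket_mem_of_apply_ne_zero {f : FockV K n} (hf : f ∈ W) {r₀ : Fin n → Fin 2}
    (hr₀ : f r₀ ≠ 0) : ket r₀ ∈ W := by
  suffices h : @Eq (FockV K n) (fun r => if ∀ i ∈ Finset.univ, r i = r₀ i then f r else 0)
      (f r₀ • ket r₀) by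
    rw [← W.smul_mem_iff hr₀, ← h]
    exact ite_forall_apply_eq_mem hψ hψd hf r₀ Finset.univ
  funext r
  show _ = f r₀ * ket r₀ r
  by_cases hr : r₀ = r
  · subst hr
    simp [ket]
  · have : ¬ ∀ i, r i = r₀ i := fun h => hr (funext h).symm
    simp [ket, hr, this]

lemma exists_mem_apply_ne_zero (hW : W ≠ ⊥) (r : Fin n → Fin 2) : ∃ f ∈ W, f r ≠ 0 := by
  obtain ⟨f, hf, hf0⟩ := Submodule.exists_mem_ne_zero_of_ne_bot hW
  obtain ⟨r₀, hr₀⟩ := Function.ne_iff.mp hf0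
  suffices h : {r | ∃ f ∈ W, f r ≠ 0} = Set.univ from Set.eq_univ_iff_forall.mp h r
  refine Set.eq_univ_of_forall_update_mem ⟨f, hf, hr₀⟩ ?_
  rintro s ⟨f, hf, hfs⟩ i a
  by_cases ha : a = s i
  · exact ⟨f, hf, by rwa [ha, update_eq_self]⟩
  · refine ⟨ψop i f + ψdop i f, W.add_mem (hψ i f hf) (hψd i f hf), ?_⟩
    rw [ψop_add_ψdop_apply, update_self, update_idem,
      ← Fin.two_eq_add_one_of_ne (Ne.symm ha), update_eq_self]
    exact mul_ne_zero (fockSgn_ne_zero _ _) hfs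

lemma ket_mem (hW : W ≠ ⊥) (r : Fin n → Fin 2) : ket r ∈ W :=
  let ⟨_, hf, hfr⟩ := exists_mem_apply_ne_zero hψ hψd hW r
  ket_mem_of_apply_ne_zero hψ hψd hf hfr

end Invariant

end FockV

open FockV in
theorem stmt8_general {K : Type*} [Field K] (n : ℕ)
    (W : Submodule K (FockV K n))
    (hψ : ∀ (i : Fin n) (f : FockV K n), f ∈ W → ψop i f ∈ W)
    (hψd : ∀ (i : Fin n) (f : FockV K n), f ∈ W → ψdop i f ∈ W)
    (hW : W ≠ ⊥) : W = ⊤ :=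
  eq_top_of_forall_ket_mem (ket_mem hψ hψd hW)

/-- The Fock space `V_q(n)` is irreducible as a module over the deformed
Clifford algebra `Cl_q(n)`: any nonzero subspace invariant under all the operators
`ψ_i`, `ψ_i†`, `v_i^{±1}` is the whole space. -/
theorem stmt8 {K : Type*} [Field K] (q : K) (hq0 : q ≠ 0) (hq1 : q ^ 2 ≠ 1) (n : ℕ)
    (W : Submodule K (FockV K n))
    (hψ : ∀ (i : Fin n) (f : FockV K n), f ∈ W → ψop i f ∈ W)
    (hψd : ∀ (i : Fin n) (f : FockV K n), f ∈ W → ψdop i f ∈ W)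
    (hv : ∀ (i : Fin n) (f : FockV K n), f ∈ W → vop q i f ∈ W)
    (hvinv : ∀ (i : Fin n) (f : FockV K n), f ∈ W → vinvop q i f ∈ W)
    (hW : W ≠ ⊥) : W = ⊤ :=
  stmt8_general n W hψ hψd hW
end

section
/- In the deformed boson algebra, the quantum Serre-type identity φ_m² φ_m† + φ_m† φ_m² - (q + q^{-1}) φ_m φ_m† φ_m = 0 holds. -/
/-!
The Serre element is an iterated deformed commutator: with `[x, y]_q = x y - q y x`,
`x² y + y x² - (q + q⁻¹) x y x = [x, [x, y]_q]_{q⁻¹}`.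
The defining relation says `[φ, φ†]_q = u⁻¹`, and `u⁻¹ φ = q φ u⁻¹` is exactly the statement
that the outer `q⁻¹`-commutator `[φ, u⁻¹]_{q⁻¹}` vanishes.
-/

section DeformedCommutator

variable {K A : Type*} [Field K] [Ring A] [Algebra K A]

def qComm (q : K) (x y : A) : A := x * y - q • (y * x)

theorem serre_eq_qComm_qComm {q : K} (hq : q ≠ 0) (x y : A) :
    x ^ 2 * y + y * x ^ 2 - (q + q⁻¹) • (x * y * x) = qComm q⁻¹ x (qComm q x y) := by
  simp only [qComm, mul_sub, sub_mul, mul_smul_comm, smul_mul_assoc, smul_sub, smul_smul, pow_two,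
    mul_assoc]
  match_scalars <;> grind

theorem qComm_inv_eq_zero_of_mul_eq_smul {q : K} (hq : q ≠ 0) {x c : A}
    (h : c * x = q • (x * c)) : qComm q⁻¹ x c = 0 := by
  rw [qComm, h, smul_smul, inv_mul_cancel₀ hq, one_smul, sub_self]

end DeformedCommutator

theorem stmt14_general {K A : Type*} [Field K] [Ring A] [Algebra K A]
    (q : K) (hq0 : q ≠ 0)
    (φ φd uinv : A)
    (huinvφ : uinv * φ = q • (φ * uinv))
    (rel_q : φ * φd - q • (φd * φ) = uinv) :
    φ ^ 2 * φd + φd * φ ^ 2 - (q + q⁻¹) • (φ * φd * φ) = 0 := by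
  have hcomm : qComm q φ φd = uinv := rel_q
  rw [serre_eq_qComm_qComm hq0, hcomm]
  exact qComm_inv_eq_zero_of_mul_eq_smul hq0 huinvφ

/-- in the deformed boson algebra, the quantum Serre-type identity
`φ_m² φ_m† + φ_m† φ_m² - (q + q⁻¹) φ_m φ_m† φ_m = 0` holds. -/
theorem stmt14 {K A : Type*} [Field K] [Ring A] [Algebra K A]
    (q : K) (hq0 : q ≠ 0) (hq1 : q ^ 2 ≠ 1)
    (φ φd u uinv : A)
    (hu : u * uinv = 1) (hu' : uinv * u = 1)
    (huφ : u * φ = q⁻¹ • (φ * u)) (huφd : u * φd = q • (φd * u))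
    (huinvφ : uinv * φ = q • (φ * uinv)) (huinvφd : uinv * φd = q⁻¹ • (φd * uinv))
    (rel_q : φ * φd - q • (φd * φ) = uinv)
    (rel_qinv : φ * φd - q⁻¹ • (φd * φ) = u) :
    φ ^ 2 * φd + φd * φ ^ 2 - (q + q⁻¹) • (φ * φd * φ) = 0 :=
  stmt14_general q hq0 φ φd uinv huinvφ rel_q
end

section
/- In the deformed Clifford superalgebra Cl_q(m,n), the images E_m = φ_m ψ_1† and E_{m+1} = ψ_1 ψ_2† satisfy E_m E_{m+1} - q^{-1} E_{m+1} E_m = q^{-1} φ_m ψ_2† v_1^{-1}. -/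
/-! Pulling the central `φ_m` out of both products and using `ψ_2† ψ_1† = -ψ_1† ψ_2†`, the
left-hand side becomes `φ_m (ψ_1† ψ_1 + q⁻¹ ψ_1 ψ_1†) ψ_2†`; the bracket is `q⁻¹ v_1⁻¹` by the
defining relation `ψ_1 ψ_1† + q ψ_1† ψ_1 = v_1⁻¹`, and `v_1⁻¹` commutes with `ψ_2†`. -/

theorem add_inv_smul_eq_of_add_smul_eq {K M : Type*} [DivisionRing K] [AddCommMonoid M]
    [Module K M] {q : K} (hq : q ≠ 0) {x y z : M} (h : x + q • y = z) :
    y + q⁻¹ • x = q⁻¹ • z := by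
  rw [← h, smul_add, smul_smul, inv_mul_cancel₀ hq, one_smul, add_comm]

theorem mul_mul_sub_smul_mul_mul_of_anticomm {K A : Type*} [CommRing K] [Ring A] [Algebra K A]
    (r : K) {a b c : A} (hbc : b * c + c * b = 0) :
    b * (a * c) - r • (a * c * b) = (b * a + r • (a * b)) * c := by
  have hcb : c * b = -(b * c) := eq_neg_of_add_eq_zero_right hbc
  rw [mul_assoc a c b, hcb, mul_neg, smul_neg, sub_neg_eq_add, add_mul, smul_mul_assoc,
    mul_assoc, mul_assoc]

theorem stmt16_general {K A : Type*} [Field K] [Ring A] [Algebra K A]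
    (q : K) (hq0 : q ≠ 0)
    (φ w1 w1d w2d v1 v1inv : A)
    -- fermionic relations
    (rel_q : w1 * w1d + q • (w1d * w1) = v1inv)
    (h12d : w1d * w2d + w2d * w1d = 0)
    (hv12' : v1inv * w2d = w2d * v1inv)
    -- bosonic and fermionic generators commute
    (hb : ∀ y ∈ [w1, w1d, w2d, v1, v1inv], φ * y = y * φ) :
    (φ * w1d) * (w1 * w2d) - q⁻¹ • ((w1 * w2d) * (φ * w1d)) =
      q⁻¹ • (φ * w2d * v1inv) := by
  have hφ : Commute φ (w1 * w2d) :=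
    Commute.mul_right (hb w1 (by simp)) (hb w2d (by simp))
  have hkey : w1d * w1 + q⁻¹ • (w1 * w1d) = q⁻¹ • v1inv :=
    add_inv_smul_eq_of_add_smul_eq hq0 rel_q
  calc (φ * w1d) * (w1 * w2d) - q⁻¹ • ((w1 * w2d) * (φ * w1d))
      = φ * (w1d * (w1 * w2d) - q⁻¹ • (w1 * w2d * w1d)) := by
        rw [← mul_assoc (w1 * w2d), ← hφ.eq, mul_sub, mul_smul_comm, mul_assoc, mul_assoc]
    _ = φ * ((q⁻¹ • v1inv) * w2d) := by
        rw [mul_mul_sub_smul_mul_mul_of_anticomm q⁻¹ h12d, hkey]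
    _ = q⁻¹ • (φ * w2d * v1inv) := by
        rw [smul_mul_assoc, mul_smul_comm, hv12', mul_assoc]

/-- in the deformed Clifford superalgebra `Cl_q(m,n)`, the elements
`E_m = φ_m ψ_1†` and `E_{m+1} = ψ_1 ψ_2†` satisfy
`E_m E_{m+1} - q⁻¹ E_{m+1} E_m = q⁻¹ φ_m ψ_2† v_1⁻¹`.
Here `φ` is the bosonic generator `φ_m`, `w1, w1d, w2d, v1, v1inv` are the fermionic
generators `ψ_1, ψ_1†, ψ_2†, v_1^{±1}`. -/
theorem stmt16 {K A : Type*} [Field K] [Ring A] [Algebra K A]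
    (q : K) (hq0 : q ≠ 0) (hq1 : q ^ 2 ≠ 1)
    (φ w1 w1d w2d v1 v1inv : A)
    -- fermionic relations
    (rel_q : w1 * w1d + q • (w1d * w1) = v1inv)
    (rel_qinv : w1 * w1d + q⁻¹ • (w1d * w1) = v1)
    (hv1 : v1 * v1inv = 1) (hv1' : v1inv * v1 = 1)
    (h12 : w1 * w2d + w2d * w1 = 0) (h12d : w1d * w2d + w2d * w1d = 0)
    (hv12 : v1 * w2d = w2d * v1) (hv12' : v1inv * w2d = w2d * v1inv)
    -- bosonic and fermionic generators commute
    (hb : ∀ y ∈ [w1, w1d, w2d, v1, v1inv], φ * y = y * φ) :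
    (φ * w1d) * (w1 * w2d) - q⁻¹ • ((w1 * w2d) * (φ * w1d)) =
      q⁻¹ • (φ * w2d * v1inv) :=
  stmt16_general q hq0 φ w1 w1d w2d v1 v1inv rel_q h12d hv12' hb
end

section
/- In the deformed Clifford superalgebra Cl_q(m,n) (m ≥ 2, n ≥ 1), setting E_{m-1} = φ_{m-1} φ_m†, E_m = φ_m ψ_1†, E_{m+1} = ψ_1 ψ_2†, and X = E_m E_{m+1} - q^{-1} E_{m+1} E_m, the higher-order quantum Serre relation E_m E_{m-1} X - q E_m X E_{m-1} + E_{m-1} X E_m - q X E_{m-1} E_m = 0 holds. -/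
/-!
Bosonic and fermionic generators commute, so every monomial of the Serre expression factors
into a bosonic and a fermionic part. The fermionic relations give `X = q⁻¹ φ_m v_1⁻¹ ψ_2†` and
`ψ_1† (v_1⁻¹ ψ_2†) = -q⁻¹ (v_1⁻¹ ψ_2†) ψ_1†`, so all four terms end in `v_1⁻¹ ψ_2† ψ_1†`. Its
coefficient is `φ_{m-1} (φ² φ† + φ† φ² - (q + q⁻¹) φ φ† φ)` with `φ = φ_m`, and the cubic
relation `φ² φ† + φ† φ² = (q + q⁻¹) φ φ† φ` is `q u φ = φ u` for `u = φ φ† - q⁻¹ φ† φ`.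
-/

section QSerre

variable {R A : Type*} [CommRing R] [Ring A] [Algebra R A]

def qSerre (q : R) (a b c : A) : A :=
  a * b * c - q • (a * c * b) + b * c * a - q • (c * b * a)

theorem qSerre_smul_right (q r : R) (a b c : A) :
    qSerre q a b (r • c) = r • qSerre q a b c := by
  simp only [qSerre, smul_mul_assoc, mul_smul_comm, smul_sub, smul_add, smul_comm q r]

end QSerre

section Field

variable {K A : Type*} [Field K] [Ring A] [Algebra K A] {q : K}

theorem qSerre_mul_mul_of_commute (hq : q ≠ 0) {a b c f g : A}
    (hfb : Commute f b) (hfc : Commute f c) (hga : Commute g a) (hgb : Commute g b)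
    (hfg : f * g = -(q⁻¹ • (g * f))) :
    qSerre q (a * f) b (c * g) =
      (a * c * b + b * c * a - q⁻¹ • (a * b * c) - q • (c * b * a)) * (g * f) := by
  have t₁ : a * f * b * (c * g) = a * b * c * (f * g) := by
    simp only [mul_assoc, hfb.left_comm, hfc.left_comm]
  have t₂ : a * f * (c * g) * b = a * c * b * (f * g) := by
    simp only [mul_assoc, hfc.left_comm, hgb.eq, hfb.left_comm]
  have t₃ : b * (c * g) * (a * f) = b * c * a * (g * f) := by
    simp only [mul_assoc, hga.left_comm]
  have t₄ : c * g * b * (a * f) = c * b * a * (g * f) := by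
    simp only [mul_assoc, hgb.left_comm, hga.left_comm]
  rw [qSerre, t₁, t₂, t₃, t₄, hfg]
  simp only [mul_neg, mul_smul_comm, sub_mul, add_mul, smul_mul_assoc, smul_neg, smul_smul,
    mul_inv_cancel₀ hq, one_smul]
  abel

theorem mul_mul_add_mul_mul_eq_of_smul_comm (hq : q ≠ 0) {φ φd u : A}
    (hu : φ * φd - q⁻¹ • (φd * φ) = u) (huφ : u * φ = q⁻¹ • (φ * u)) :
    φ * φ * φd + φd * φ * φ = (q + q⁻¹) • (φ * φd * φ) := by
  have h : q • (u * φ) = φ * u := by rw [huφ, smul_smul, mul_inv_cancel₀ hq, one_smul]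
  subst hu
  simp only [sub_mul, mul_sub, smul_sub, smul_mul_assoc, mul_smul_comm, smul_smul,
    mul_inv_cancel₀ hq, one_smul, mul_assoc] at h ⊢
  linear_combination (norm := module) -h

theorem mul_mul_sub_inv_smul_mul_mul (hq : q ≠ 0) {ψ ψd χd v : A}
    (hv : ψ * ψd + q • (ψd * ψ) = v) (hanti : ψd * χd + χd * ψd = 0) :
    ψd * (ψ * χd) - q⁻¹ • (ψ * χd * ψd) = q⁻¹ • (v * χd) := by
  have : χd * ψd = -(ψd * χd) := eq_neg_of_add_eq_zero_right hanti
  subst hv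
  simp only [mul_assoc, this, mul_neg, smul_neg, sub_neg_eq_add, add_mul, smul_add,
    smul_mul_assoc, smul_smul, inv_mul_cancel₀ hq, one_smul]
  abel

theorem mul_mul_eq_neg_inv_smul_mul_mul (hq : q ≠ 0) {ψd χd v : A}
    (hvψd : v * ψd = q • (ψd * v)) (hanti : ψd * χd + χd * ψd = 0) :
    ψd * (v * χd) = -(q⁻¹ • (v * χd * ψd)) := by
  have hψdv : ψd * v = q⁻¹ • (v * ψd) := by
    rw [hvψd, smul_smul, inv_mul_cancel₀ hq, one_smul]
  rw [← mul_assoc, hψdv, smul_mul_assoc, mul_assoc, mul_assoc,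
    eq_neg_of_add_eq_zero_left hanti, mul_neg, smul_neg]

theorem mul_mul_add_mul_mul_sub_smul_eq_zero (hq : q ≠ 0) {p φ φd u : A} (hpφ : Commute p φ)
    (hu : φ * φd - q⁻¹ • (φd * φ) = u) (huφ : u * φ = q⁻¹ • (φ * u)) :
    φ * φ * (p * φd) + p * φd * φ * φ - q⁻¹ • (φ * (p * φd) * φ)
      - q • (φ * (p * φd) * φ) = 0 := by
  have hcubic := mul_mul_add_mul_mul_eq_of_smul_comm hq hu huφ
  simp only [mul_assoc, hpφ.symm.left_comm] at hcubic ⊢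
  rw [← mul_add, hcubic, mul_smul_comm]
  module

end Field

/-- Here `p = φ_{m-1}`, `φ = φ_m`, `φd = φ_m†`, `u, uinv = u_m^{±1}`, and
`w1, w1d, w2d, v1, v1inv` are `ψ_1, ψ_1†, ψ_2†, v_1^{±1}`. -/
theorem stmt17_general {K A : Type*} [Field K] [Ring A] [Algebra K A]
    (q : K) (hq0 : q ≠ 0)
    (p φ φd u uinv w1 w1d w2d v1 v1inv : A)
    -- bosonic relations for `φ_m`, `u_m`
    (brel_qinv : φ * φd - q⁻¹ • (φd * φ) = u)
    (huφ : u * φ = q⁻¹ • (φ * u))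
    -- `φ_{m-1}` commutes with the other bosonic generators
    (hp : ∀ y ∈ [φ, φd, u, uinv], p * y = y * p)
    -- fermionic relations
    (frel_q : w1 * w1d + q • (w1d * w1) = v1inv)
    (hv1invw1d : v1inv * w1d = q • (w1d * v1inv))
    (h12d : w1d * w2d + w2d * w1d = 0)
    -- bosonic and fermionic generators commute
    (hbf : ∀ x ∈ [p, φ, φd, u, uinv], ∀ y ∈ [w1, w1d, w2d, v1, v1inv], x * y = y * x) :
    ((φ * w1d) * (p * φd) * ((φ * w1d) * (w1 * w2d) - q⁻¹ • ((w1 * w2d) * (φ * w1d)))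
      - q • ((φ * w1d) * ((φ * w1d) * (w1 * w2d) - q⁻¹ • ((w1 * w2d) * (φ * w1d)))
              * (p * φd))
      + (p * φd) * ((φ * w1d) * (w1 * w2d) - q⁻¹ • ((w1 * w2d) * (φ * w1d)))
          * (φ * w1d)
      - q • (((φ * w1d) * (w1 * w2d) - q⁻¹ • ((w1 * w2d) * (φ * w1d)))
              * (p * φd) * (φ * w1d))) = 0 := by
  have comm : ∀ x ∈ [p, φ, φd, u, uinv], ∀ y ∈ [w1, w1d, w2d, v1, v1inv], Commute y x :=
    fun x hx y hy => (hbf x hx y hy).symm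
  have hX : (φ * w1d) * (w1 * w2d) - q⁻¹ • ((w1 * w2d) * (φ * w1d))
      = q⁻¹ • (φ * (v1inv * w2d)) := by
    have hφ : Commute (w1 * w2d) φ := (comm φ (by simp) w1 (by simp)).mul_left
      (comm φ (by simp) w2d (by simp))
    rw [mul_assoc, hφ.left_comm, ← mul_smul_comm, ← mul_sub,
      mul_mul_sub_inv_smul_mul_mul hq0 frel_q h12d, mul_smul_comm]
  have hw1d : ∀ x ∈ [p, φ, φd, u, uinv], Commute w1d x := fun x hx => comm x hx w1d (by simp)
  have hfermion : ∀ x ∈ [p, φ, φd, u, uinv], Commute (v1inv * w2d) x :=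
    fun x hx => (comm x hx v1inv (by simp)).mul_left (comm x hx w2d (by simp))
  change qSerre q (φ * w1d) (p * φd) _ = 0
  rw [hX, qSerre_smul_right, qSerre_mul_mul_of_commute hq0
    ((hw1d p (by simp)).mul_right (hw1d φd (by simp))) (hw1d φ (by simp))
    (hfermion φ (by simp)) ((hfermion p (by simp)).mul_right (hfermion φd (by simp)))
    (mul_mul_eq_neg_inv_smul_mul_mul hq0 hv1invw1d h12d),
    mul_mul_add_mul_mul_sub_smul_eq_zero hq0 (hp φ (by simp)) brel_qinv huφ, zero_mul, smul_zero]

/-- in `Cl_q(m,n)` (`m ≥ 2`, `n ≥ 1`), setting `E_{m-1} = φ_{m-1} φ_m†`,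
`E_m = φ_m ψ_1†`, `E_{m+1} = ψ_1 ψ_2†` and `X = E_m E_{m+1} - q⁻¹ E_{m+1} E_m`, the
higher-order quantum Serre relation
`E_m E_{m-1} X - q E_m X E_{m-1} + E_{m-1} X E_m - q X E_{m-1} E_m = 0` holds.
Here `p = φ_{m-1}`, `φ = φ_m`, `φd = φ_m†`, `u, uinv = u_m^{±1}`, and
`w1, w1d, w2d, v1, v1inv` are `ψ_1, ψ_1†, ψ_2†, v_1^{±1}`. -/
theorem stmt17 {K A : Type*} [Field K] [Ring A] [Algebra K A]
    (q : K) (hq0 : q ≠ 0) (hq1 : q ^ 2 ≠ 1)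
    (p φ φd u uinv w1 w1d w2d v1 v1inv : A)
    -- bosonic relations for `φ_m`, `u_m`
    (brel_q : φ * φd - q • (φd * φ) = uinv)
    (brel_qinv : φ * φd - q⁻¹ • (φd * φ) = u)
    (hu : u * uinv = 1) (hu' : uinv * u = 1)
    (huφ : u * φ = q⁻¹ • (φ * u)) (huφd : u * φd = q • (φd * u))
    (huinvφ : uinv * φ = q • (φ * uinv)) (huinvφd : uinv * φd = q⁻¹ • (φd * uinv))
    -- `φ_{m-1}` commutes with the other bosonic generators
    (hp : ∀ y ∈ [φ, φd, u, uinv], p * y = y * p)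
    -- fermionic relations
    (frel_q : w1 * w1d + q • (w1d * w1) = v1inv)
    (frel_qinv : w1 * w1d + q⁻¹ • (w1d * w1) = v1)
    (hv1 : v1 * v1inv = 1) (hv1' : v1inv * v1 = 1)
    (hv1w1 : v1 * w1 = q • (w1 * v1)) (hv1w1d : v1 * w1d = q⁻¹ • (w1d * v1))
    (hv1invw1 : v1inv * w1 = q⁻¹ • (w1 * v1inv))
    (hv1invw1d : v1inv * w1d = q • (w1d * v1inv))
    (hv1w2d : v1 * w2d = w2d * v1) (hv1invw2d : v1inv * w2d = w2d * v1inv)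
    (h12 : w1 * w2d + w2d * w1 = 0) (h12d : w1d * w2d + w2d * w1d = 0)
    -- bosonic and fermionic generators commute
    (hbf : ∀ x ∈ [p, φ, φd, u, uinv], ∀ y ∈ [w1, w1d, w2d, v1, v1inv], x * y = y * x) :
    ((φ * w1d) * (p * φd) * ((φ * w1d) * (w1 * w2d) - q⁻¹ • ((w1 * w2d) * (φ * w1d)))
      - q • ((φ * w1d) * ((φ * w1d) * (w1 * w2d) - q⁻¹ • ((w1 * w2d) * (φ * w1d)))
              * (p * φd))
      + (p * φd) * ((φ * w1d) * (w1 * w2d) - q⁻¹ • ((w1 * w2d) * (φ * w1d)))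
          * (φ * w1d)
      - q • (((φ * w1d) * (w1 * w2d) - q⁻¹ • ((w1 * w2d) * (φ * w1d)))
              * (p * φd) * (φ * w1d))) = 0 :=
  stmt17_general q hq0 p φ φd u uinv w1 w1d w2d v1 v1inv brel_qinv huφ hp frel_q hv1invw1d h12d hbf
end

section
/- Every finite-dimensional irreducible representation of the Lie superalgebra osp(1|2) has odd dimension; consequently, the 2-dimensional spinor representation V_q(1) of U_q(osp(1|2)) is not a deformation of any finite-dimensional irreducible representation of osp(1|2). -/
/-!
Put `h = e f + f e`. Since `[h, e] = e` and `[h, f] = -f`, the operator `e` raises and `f` lowers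
`h`-eigenvalues by one, so in finite dimension there is a highest-weight vector `v`
(`e v = 0`, `h v = μ v`) and the nonzero vectors `fᵏ v`, `k ≤ j`, of its string are linearly
independent. The identity `e f = h - f e` gives `e f²ᵐ⁺¹ v = (μ - m) f²ᵐ v` and
`e f²ᵐ⁺² v = -(m + 1) f²ᵐ⁺¹ v`, so the string spans an `e`- and `f`-invariant subspace, which is
all of `V` by irreducibility. If its length `j + 1 = 2m + 2` were even, applying `e` to
`f²ᵐ⁺² v = 0` would give `(m + 1) f²ᵐ⁺¹ v = 0`, which is impossible; hence `dim V = j + 1` is odd.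
-/

open Module Submodule

theorem Nat.exists_ne_zero_and_succ_eq_zero {M : Type*} [Zero M] {u : ℕ → M} (h0 : u 0 ≠ 0)
    (h : ∃ k, u k = 0) : ∃ j, u j ≠ 0 ∧ u (j + 1) = 0 := by
  by_contra! hsucc
  obtain ⟨k, hk⟩ := h
  exact Nat.rec h0 (fun j hj => hsucc j hj) k hk

section

variable {K V : Type*} [Field K] [AddCommGroup V] [Module K V]

namespace Module.End

theorem apply_eq_add_smul_of_lie_eq_smul {h a : End K V} {c μ : K} (hrel : ⁅h, a⁆ = c • a)
    {x : V} (hx : h x = μ • x) : h (a x) = (μ + c) • a x := by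
  have hx' := LinearMap.congr_fun hrel x
  simp only [Ring.lie_def, LinearMap.sub_apply, mul_apply, hx, map_smul,
    LinearMap.smul_apply] at hx'
  rw [add_smul, ← hx']
  abel

theorem pow_apply_eq_add_smul_of_lie_eq_smul {h a : End K V} {c μ : K} (hrel : ⁅h, a⁆ = c • a)
    {x : V} (hx : h x = μ • x) (k : ℕ) : h ((a ^ k) x) = (μ + k * c) • (a ^ k) x := by
  induction k with
  | zero => simpa using hx
  | succ k ih =>
    rw [pow_succ', mul_apply, apply_eq_add_smul_of_lie_eq_smul hrel ih]
    push_cast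
    ring_nf

theorem pow_apply_ne_zero_of_le {a : End K V} {x : V} {i j : ℕ} (hj : (a ^ j) x ≠ 0)
    (hij : i ≤ j) : (a ^ i) x ≠ 0 := by
  intro hi
  apply hj
  rw [← Nat.sub_add_cancel hij, pow_add, mul_apply, hi, map_zero]

variable [CharZero K]

theorem linearIndependent_pow_apply_of_lie_eq_smul {h a : End K V} {c μ : K}
    (hrel : ⁅h, a⁆ = c • a) (hc : c ≠ 0) {x : V} (hx : h x = μ • x) {ι : Type*} {g : ι → ℕ}
    (hg : Function.Injective g) (hne : ∀ i, (a ^ g i) x ≠ 0) :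
    LinearIndependent K fun i => (a ^ g i) x := by
  refine h.eigenvectors_linearIndependent' (fun i => μ + g i * c) ?_ _ fun i =>
    ⟨mem_eigenspace_iff.2 (pow_apply_eq_add_smul_of_lie_eq_smul hrel hx _), hne i⟩
  intro i j hij
  exact hg (by simpa [hc] using hij)

theorem exists_pow_apply_eq_zero_of_lie_eq_smul [FiniteDimensional K V] {h a : End K V} {c μ : K}
    (hrel : ⁅h, a⁆ = c • a) (hc : c ≠ 0) {x : V} (hx : h x = μ • x) : ∃ k, (a ^ k) x = 0 := by
  by_contra! hne
  exact Module.Finite.not_linearIndependent_of_infinite _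
    (linearIndependent_pow_apply_of_lie_eq_smul hrel hc hx Function.injective_id hne)

theorem exists_highest_weight_vector [IsAlgClosed K] [FiniteDimensional K V] [Nontrivial V]
    {h a : End K V} {c : K} (hrel : ⁅h, a⁆ = c • a) (hc : c ≠ 0) :
    ∃ v ≠ 0, ∃ μ : K, h v = μ • v ∧ a v = 0 := by
  obtain ⟨μ, hμ⟩ := h.exists_eigenvalue
  obtain ⟨x, hx, hx0⟩ := hμ.exists_hasEigenvector
  have hx := mem_eigenspace_iff.1 hx
  obtain ⟨j, hj, hj1⟩ := Nat.exists_ne_zero_and_succ_eq_zero (u := fun k => (a ^ k) x)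
    (by simpa using hx0) (exists_pow_apply_eq_zero_of_lie_eq_smul hrel hc hx)
  refine ⟨_, hj, _, pow_apply_eq_add_smul_of_lie_eq_smul hrel hx j, ?_⟩
  rwa [pow_succ', mul_apply] at hj1

end Module.End

theorem Module.finrank_eq_of_span_pow_apply_eq_top {a : End K V} {x : V} {n : ℕ}
    (hspan : span K (Set.range fun k => (a ^ k) x) = ⊤) (hn : (a ^ n) x = 0)
    (hli : LinearIndependent K fun i : Fin n => (a ^ (i : ℕ)) x) : finrank K V = n := by
  have hsub : (Set.range fun k => (a ^ k) x) ⊆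
      insert 0 (Set.range fun i : Fin n => (a ^ (i : ℕ)) x) := by
    rintro _ ⟨k, rfl⟩
    rcases lt_or_ge k n with hk | hk
    · exact Or.inr ⟨⟨k, hk⟩, rfl⟩
    · refine Or.inl ?_
      show (a ^ k) x = 0
      rw [← Nat.sub_add_cancel hk, pow_add, End.mul_apply, hn, map_zero]
  have htop : ⊤ ≤ span K (Set.range fun i : Fin n => (a ^ (i : ℕ)) x) := by
    rw [← hspan]
    exact (span_mono hsub).trans_eq span_insert_zero
  rw [finrank_eq_card_basis (Basis.mk hli htop), Fintype.card_fin]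

namespace Osp12

variable {e f : End K V}

theorem e_apply_f_pow_apply (hrel_f : ⁅e * f + f * e, f⁆ = -f) {v : V} {μ : K}
    (hv : (e * f + f * e) v = μ • v) (hev : e v = 0) (m : ℕ) :
    e ((f ^ (2 * m + 1)) v) = (μ - m) • (f ^ (2 * m)) v ∧
      e ((f ^ (2 * m + 2)) v) = -((m : K) + 1) • (f ^ (2 * m + 1)) v := by
  have hstep (k : ℕ) : e ((f ^ (k + 1)) v) = (μ - k) • (f ^ k) v - f (e ((f ^ k) v)) := by
    have hk := End.pow_apply_eq_add_smul_of_lie_eq_smul (hrel_f.trans (neg_one_smul K f).symm) hv k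
    rw [eq_sub_iff_add_eq, pow_succ', End.mul_apply, show μ - k = μ + k * -1 by ring, ← hk]
    simp [End.mul_apply]
  have hf (k : ℕ) : f ((f ^ k) v) = (f ^ (k + 1)) v := by rw [pow_succ', End.mul_apply]
  induction m with
  | zero =>
    have h1 : e ((f ^ 1) v) = μ • (f ^ 0) v := by simpa [hev] using hstep 0
    refine ⟨by simpa using h1, ?_⟩
    rw [hstep, h1, map_smul, hf]
    push_cast
    module
  | succ m ih =>
    have hodd : e ((f ^ (2 * m + 2 + 1)) v) = (μ - (m + 1 : ℕ)) • (f ^ (2 * m + 2)) v := by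
      rw [hstep, ih.2, map_smul, hf]
      push_cast
      module
    refine ⟨hodd, ?_⟩
    rw [show 2 * (m + 1) + 2 = 2 * m + 2 + 1 + 1 by ring, hstep, hodd, map_smul, hf]
    push_cast
    module

theorem e_apply_f_pow_succ_apply_mem_span (hrel_f : ⁅e * f + f * e, f⁆ = -f) {v : V} {μ : K}
    (hv : (e * f + f * e) v = μ • v) (hev : e v = 0) (k : ℕ) :
    e ((f ^ (k + 1)) v) ∈ K ∙ (f ^ k) v := by
  obtain ⟨m, rfl | rfl⟩ := Nat.even_or_odd' k
  · rw [(e_apply_f_pow_apply hrel_f hv hev m).1]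
    exact smul_mem _ _ (mem_span_singleton_self _)
  · rw [(e_apply_f_pow_apply hrel_f hv hev m).2]
    exact smul_mem _ _ (mem_span_singleton_self _)

theorem even_of_f_pow_succ_apply_eq_zero [CharZero K] (hrel_f : ⁅e * f + f * e, f⁆ = -f)
    {v : V} {μ : K} (hv : (e * f + f * e) v = μ • v) (hev : e v = 0) {j : ℕ}
    (hj : (f ^ j) v ≠ 0) (hj1 : (f ^ (j + 1)) v = 0) : Even j := by
  obtain ⟨m, rfl | rfl⟩ := Nat.even_or_odd' j
  · exact even_two_mul m
  · have h := (e_apply_f_pow_apply hrel_f hv hev m).2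
    rw [hj1, map_zero, eq_comm, smul_eq_zero] at h
    exact absurd (h.resolve_right hj) (neg_ne_zero.2 (Nat.cast_add_one_ne_zero m))

theorem span_range_f_pow_apply_eq_top (hrel_f : ⁅e * f + f * e, f⁆ = -f) {v : V} {μ : K}
    (hv : (e * f + f * e) v = μ • v) (hev : e v = 0) (hv0 : v ≠ 0)
    (hirr : ∀ W : Submodule K V, (∀ x ∈ W, e x ∈ W) → (∀ x ∈ W, f x ∈ W) → W = ⊥ ∨ W = ⊤) :
    span K (Set.range fun k => (f ^ k) v) = ⊤ := by
  set W := span K (Set.range fun k => (f ^ k) v)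
  have hmem (k : ℕ) : (f ^ k) v ∈ W := subset_span ⟨k, rfl⟩
  have hWe : W ≤ W.comap e := span_le.2 <| by
    rintro _ ⟨k | k, rfl⟩
    · simp [hev]
    · exact span_singleton_le_iff_mem _ _ |>.2 (hmem k)
        (e_apply_f_pow_succ_apply_mem_span hrel_f hv hev k)
  have hWf : W ≤ W.comap f := span_le.2 <| by
    rintro _ ⟨k, rfl⟩
    rw [SetLike.mem_coe, mem_comap, ← End.mul_apply, ← pow_succ']
    exact hmem (k + 1)
  refine (hirr W (fun x hx => hWe hx) (fun x hx => hWf hx)).resolve_left fun hbot => hv0 ?_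
  simpa [hbot] using hmem 0

end Osp12

end

/-- every finite-dimensional irreducible representation of the Lie
superalgebra `osp(1|2)` has odd dimension; consequently the 2-dimensional spinor
representation `V_q(1)` of `U_q(osp(1|2))` is not a deformation of any finite-dimensional
irreducible representation of `osp(1|2)`.

A representation of `osp(1|2)` on a complex vector space `V` is given by the images
`e, f : End(V)` of the two odd generators; the even part acts through `e², f²` and
`h := e f + f e`, and the defining relations of `osp(1|2)` are `[h, e] = e` and
`[h, f] = -f`.  Irreducibility: the only subspaces invariant under `e` and `f` are
`⊥` and `⊤`.  The conclusion: `dim V` is odd — and in particular `dim V ≠ 2`, so no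
finite-dimensional irreducible `osp(1|2)`-module can have the dimension of `V_q(1)`. -/
theorem stmt19 (V : Type*) [AddCommGroup V] [Module ℂ V]
    [FiniteDimensional ℂ V] (hV : Nontrivial V)
    (e f : Module.End ℂ V)
    (hrel_e : ⁅e * f + f * e, e⁆ = e)
    (hrel_f : ⁅e * f + f * e, f⁆ = -f)
    (hirr : ∀ W : Submodule ℂ V,
      (∀ x ∈ W, e x ∈ W) → (∀ x ∈ W, f x ∈ W) → W = ⊥ ∨ W = ⊤) :
    Odd (Module.finrank ℂ V) ∧ Module.finrank ℂ V ≠ 2 := by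
  have hrel_f' : ⁅e * f + f * e, f⁆ = (-1 : ℂ) • f := hrel_f.trans (neg_one_smul ℂ f).symm
  obtain ⟨v, hv0, μ, hv, hev⟩ :=
    End.exists_highest_weight_vector (hrel_e.trans (one_smul ℂ e).symm) one_ne_zero
  obtain ⟨j, hj, hj1⟩ := Nat.exists_ne_zero_and_succ_eq_zero (u := fun k => (f ^ k) v)
    (by simpa using hv0) (End.exists_pow_apply_eq_zero_of_lie_eq_smul hrel_f' (by simp) hv)
  have hdim : finrank ℂ V = j + 1 :=
    finrank_eq_of_span_pow_apply_eq_top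
      (Osp12.span_range_f_pow_apply_eq_top hrel_f hv hev hv0 hirr) hj1
      (End.linearIndependent_pow_apply_of_lie_eq_smul hrel_f' (by simp) hv Fin.val_injective
        fun i => End.pow_apply_ne_zero_of_le hj (Nat.lt_succ_iff.1 i.isLt))
  obtain ⟨m, rfl⟩ := Osp12.even_of_f_pow_succ_apply_eq_zero hrel_f hv hev hj hj1
  rw [hdim]
  exact ⟨⟨m, by ring⟩, by omega⟩
end
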